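/- arXiv:1701.07446 — 2 statements merged into one kernel-verified Lean document; each statement's English description precedes it below -/
import Mathlib

section
/- For any 0 < ε̂ < 1/2, the regularized Flory–Huggins potential Ĝ (as defined piecewise above) is convex on ℝ. -/
/-!
With `φ = regMulLog ε̂` one has `Ĝ(ρ) = φ(ρ) + φ(1 - ρ)`, since `ε̂ < 1/2` keeps the two
regularized zones apart. The Taylor continuation is `C¹`, with derivative `x / ε̂ + log ε̂` below
`ε̂` and `log x + 1` above, which is nondecreasing; so `φ` is convex, and convexity survives the
reflection `ρ ↦ 1 - ρ` and the sum.
-/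

/-- The regularized Flory–Huggins potential with regularization parameter `e`. -/
noncomputable def Ghat (e ρ : ℝ) : ℝ :=
  if 1 - e ≤ ρ then
    ρ * Real.log ρ + (1 - ρ) ^ 2 / (2 * e) + (1 - ρ) * Real.log e - e / 2
  else if e ≤ ρ then
    ρ * Real.log ρ + (1 - ρ) * Real.log (1 - ρ)
  else
    (1 - ρ) * Real.log (1 - ρ) + ρ ^ 2 / (2 * e) + ρ * Real.log e - e / 2

open Real Set

section Gluing

variable {f g f' g' : ℝ → ℝ} {a : ℝ}

theorem hasDerivAt_ite_le (hf : ∀ x ≤ a, HasDerivAt f (f' x) x)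
    (hg : ∀ x, a ≤ x → HasDerivAt g (g' x) x) (hfg : f a = g a) (hfg' : f' a = g' a) (x : ℝ) :
    HasDerivAt (fun y ↦ if y ≤ a then f y else g y) (if x ≤ a then f' x else g' x) x := by
  have eq_g : EqOn (fun y ↦ if y ≤ a then f y else g y) g (Ici a) := fun y (hy : a ≤ y) ↦ by
    dsimp only
    split_ifs with h
    · rwa [le_antisymm h hy]
    · rfl
  rcases lt_trichotomy x a with hx | rfl | hx
  · rw [if_pos hx.le]
    exact (hf x hx.le).congr_of_eventuallyEq
      ((eventually_lt_nhds hx).mono fun y hy ↦ if_pos hy.le)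
  · rw [if_pos le_rfl]
    have left : HasDerivWithinAt (fun y ↦ if y ≤ x then f y else g y) (f' x) (Iic x) x :=
      (hf x le_rfl).hasDerivWithinAt.congr (fun y (hy : y ≤ x) ↦ if_pos hy) (if_pos le_rfl)
    have right : HasDerivWithinAt _ (f' x) (Ici x) x :=
      hfg' ▸ (hg x le_rfl).hasDerivWithinAt.congr eq_g (eq_g self_mem_Ici)
    simpa only [Iic_union_Ici, hasDerivWithinAt_univ] using left.union right
  · rw [if_neg hx.not_ge]
    exact (hg x hx.le).congr_of_eventuallyEq
      ((eventually_gt_nhds hx).mono fun y hy ↦ eq_g hy.le)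

theorem convexOn_univ_ite_le (hf : ∀ x ≤ a, HasDerivAt f (f' x) x)
    (hg : ∀ x, a ≤ x → HasDerivAt g (g' x) x) (hfg : f a = g a) (hfg' : f' a = g' a)
    (hf' : MonotoneOn f' (Iic a)) (hg' : MonotoneOn g' (Ici a)) :
    ConvexOn ℝ univ (fun y ↦ if y ≤ a then f y else g y) := by
  have hF := hasDerivAt_ite_le hf hg hfg hfg'
  refine Monotone.convexOn_univ_of_deriv (fun x ↦ (hF x).differentiableAt) ?_
  rw [funext fun x ↦ (hF x).deriv]
  refine MonotoneOn.Iic_union_Ici (hf'.congr fun y (hy : y ≤ a) ↦ (if_pos hy).symm)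
    (hg'.congr fun y (hy : a ≤ y) ↦ ?_)
  split_ifs with h
  · rw [le_antisymm h hy, hfg']
  · rfl

end Gluing

/-- `x log x`, continued below `e` by its second-order Taylor polynomial at `e`. -/
noncomputable def regMulLog (e x : ℝ) : ℝ :=
  if x ≤ e then x ^ 2 / (2 * e) + x * log e - e / 2 else x * log x

theorem convexOn_regMulLog {e : ℝ} (he : 0 < e) : ConvexOn ℝ univ (regMulLog e) := by
  refine convexOn_univ_ite_le (f' := fun x ↦ x / e + log e) (g' := fun x ↦ log x + 1)
    (fun x _ ↦ ?_) (fun x hx ↦ hasDerivAt_mul_log (he.trans_le hx).ne') ?_ ?_ ?_ ?_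
  · refine ((((hasDerivAt_pow 2 x).div_const (2 * e)).add
      ((hasDerivAt_id' x).mul_const (log e))).sub_const (e / 2)).congr_deriv ?_
    field_simp
    ring
  · field_simp
    ring
  · simp [div_self he.ne', add_comm]
  · exact fun x _ y _ hxy ↦ by simp only; gcongr
  · exact fun x (hx : e ≤ x) y _ hxy ↦ by simp only; gcongr; linarith

theorem Ghat_eq_regMulLog_add {e : ℝ} (he0 : 0 < e) (he : e < 1 / 2) :
    Ghat e = fun ρ ↦ regMulLog e ρ + regMulLog e (1 - ρ) := by
  funext ρ
  unfold Ghat regMulLog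
  split_ifs <;> try linarith
  obtain rfl : ρ = e := by linarith
  field_simp
  ring

theorem stmt_5 (e : ℝ) (he0 : 0 < e) (he : e < 1 / 2) :
    ConvexOn ℝ Set.univ (Ghat e) := by
  rw [Ghat_eq_regMulLog_add he0 he]
  have reflect := (convexOn_regMulLog he0).comp_affineMap
    (AffineMap.const ℝ ℝ (1 : ℝ) - AffineMap.id ℝ ℝ)
  exact (convexOn_regMulLog he0).add reflect
end

section
/- For any 0 < ε̂ < 1/2, the regularized Flory–Huggins potential Ĝ is bounded below on ℝ by -ln 2 - ε̂/2. -/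
/-!
In the middle range `Ghat e` is minus the binary entropy, which is at most `log 2`. The two outer
branches are exchanged by `ρ ↦ 1 - ρ`, so it suffices to bound the left one for `ρ ≤ e`: there
`(1 - ρ) log (1 - ρ) ≥ -ρ`, `ρ² / (2e) - ρ ≥ -e/2` and `ρ log e ≥ e log e`, and finally
`e log e - e/2 ≥ -log 2` follows from `x - 1 ≤ x log x` at `x = 2e` and `log 2 > 1/2`.
-/

open Real

lemma neg_log_two_le_mul_log_sub_half {e : ℝ} (he0 : 0 < e) (he1 : e ≤ 1) :
    -log 2 ≤ e * log e - e / 2 := by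
  have htangent : 2 * e - 1 ≤ 2 * e * log (2 * e) := self_sub_one_le_mul_log (by positivity)
  rw [log_mul two_ne_zero he0.ne'] at htangent
  nlinarith [log_two_gt_d9]

lemma neg_log_two_sub_half_le_Ghat_left_branch {e ρ : ℝ} (he0 : 0 < e) (he1 : e ≤ 1)
    (hρ : ρ ≤ e) :
    -log 2 - e / 2 ≤ (1 - ρ) * log (1 - ρ) + ρ ^ 2 / (2 * e) + ρ * log e - e / 2 := by
  have hentropy : -ρ ≤ (1 - ρ) * log (1 - ρ) := by
    linarith [self_sub_one_le_mul_log (x := 1 - ρ) (by linarith)]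
  have hquadratic : -e / 2 ≤ ρ ^ 2 / (2 * e) - ρ := by
    have : ρ ^ 2 / (2 * e) - ρ = (ρ - e) ^ 2 / (2 * e) - e / 2 := by field_simp; ring
    rw [this]
    linarith [div_nonneg (sq_nonneg (ρ - e)) (by positivity : (0 : ℝ) ≤ 2 * e)]
  have hlinear : e * log e ≤ ρ * log e := mul_le_mul_of_nonpos_right hρ (log_nonpos he0.le he1)
  linarith [neg_log_two_le_mul_log_sub_half he0 he1]

theorem stmt_6 (e : ℝ) (he0 : 0 < e) (he : e < 1 / 2) :
    ∀ ρ : ℝ, -Real.log 2 - e / 2 ≤ Ghat e ρ := by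
  intro ρ
  have he1 : e ≤ 1 := by linarith
  unfold Ghat
  split_ifs with hright hmiddle
  · simpa only [sub_sub_cancel] using
      neg_log_two_sub_half_le_Ghat_left_branch (ρ := 1 - ρ) he0 he1 (by linarith)
  · have hentropy := binEntropy_le_log_two (p := ρ)
    simp only [binEntropy, log_inv, mul_neg] at hentropy
    linarith
  · exact neg_log_two_sub_half_le_Ghat_left_branch he0 he1 (not_le.mp hmiddle).le
end
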